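/- Let G be a directed graph with terminals T and fix a vertex z and an integer p. The number of sets S such that (i) S is an important v–T separator of size at most p for some vertex v, and (ii) z lies in the exact reverse shadow of S (S is a minimal z–T separator), is at most 4^p. -/

import Mathlib

variable {V : Type*}

/-- A single edge step in `G \ S`: an edge of `E` with both endpoints outside `S`. -/
def DStep (E : V → V → Prop) (S : Set V) (a b : V) : Prop :=
  E a b ∧ a ∉ S ∧ b ∉ S

/-- `b` is reachable from `a` by a directed path in `G \ S`. -/
def DReach (E : V → V → Prop) (S : Set V) (a b : V) : Prop :=
  Relation.ReflTransGen (DStep E S) a b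

/-- The set of vertices reachable from the set `X` in `G \ S`. -/
def RSet (E : V → V → Prop) (S X : Set V) : Set V :=
  {v | ∃ x ∈ X, DReach E S x v}

/-- `S` is an `X`–`Y` separator: disjoint from `X ∪ Y` and destroying all `X → Y` paths. -/
def IsSep (E : V → V → Prop) (X Y S : Set V) : Prop :=
  S ∩ (X ∪ Y) = ∅ ∧ ∀ x ∈ X, ∀ y ∈ Y, ¬ DReach E S x y

/-- `S` is an inclusion-wise minimal `X`–`Y` separator. -/
def IsMinSep (E : V → V → Prop) (X Y S : Set V) : Prop :=
  IsSep E X Y S ∧ ∀ S', S' ⊂ S → ¬ IsSep E X Y S'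

/-- `S` is an important `X`–`Y` separator: a minimal separator such that no separator of at
most the same size has a strictly larger set of vertices reachable from `X`. -/
def IsImpSep (E : V → V → Prop) (X Y S : Set V) : Prop :=
  IsMinSep E X Y S ∧
    ¬ ∃ S', IsSep E X Y S' ∧ S'.ncard ≤ S.ncard ∧ RSet E S X ⊂ RSet E S' X

/-- `S` is a (vertex) multiway cut of `(G, T)`. -/
def IsMWC (E : V → V → Prop) (T S : Set V) : Prop :=
  S ∩ T = ∅ ∧ ∀ t₁ ∈ T, ∀ t₂ ∈ T, t₁ ≠ t₂ → ¬ DReach E S t₁ t₂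

/-- The forward shadow of `S` with respect to `T`: vertices outside `S ∪ T` not reachable
from `T` in `G \ S`. -/
def fShadow (E : V → V → Prop) (T S : Set V) : Set V :=
  {v | v ∉ S ∧ v ∉ T ∧ ∀ t ∈ T, ¬ DReach E S t v}

/-- The reverse shadow of `S` with respect to `T`: vertices outside `S ∪ T` that cannot
reach `T` in `G \ S`. -/
def rShadow (E : V → V → Prop) (T S : Set V) : Set V :=
  {v | v ∉ S ∧ v ∉ T ∧ ∀ t ∈ T, ¬ DReach E S v t}

/-- The adjacency of `torso(G, C)`: an edge `(a, b)` whenever `a, b ∈ C` and `G` has a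
directed `a → b` path whose internal vertices all lie outside `C`. -/
def TorsoAdj (E : V → V → Prop) (C : Set V) (a b : V) : Prop :=
  a ∈ C ∧ b ∈ C ∧ ∃ w, E a w ∧ Relation.ReflTransGen (fun x y => x ∉ C ∧ E x y) w b

/-!
If `z` lies in the exact reverse shadow of an important `v`–`T` separator `S`, then `S` is
already an important `z`–`T` separator. Otherwise take a smallest `z`–`T` separator `S'` of
size at most `|S|` whose reachable set `B` strictly contains that of `S`, and uncross `B` with
the set `A` reachable from `{v, z}` in `G \ S`: by submodularity of `|N⁺(·)|` and the choice
of `S'`, `N⁺(A ∪ B)` is a `v`–`T` separator of size at most `|S|` reaching strictly further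
than `S`.

It remains to bound the important `z`–`T` separators of size at most `p` by `4^p`. Branch on a
vertex `v` of the furthest minimum `X`–`T` separator: either `v ∈ S` (delete `v`; `p` drops by
one) or `v ∉ S`, in which case `v` is reachable from `z` in `G \ S` (important separators lie
beyond the furthest minimum one) and may be added to `X`, which increases the minimum cut
size `λ`. The measure `2p - λ` drops in both branches.
-/

def outNbhd (E : V → V → Prop) (A : Set V) : Set V :=
  {w | w ∉ A ∧ ∃ a ∈ A, E a w}

section Reachability

variable {E : V → V → Prop} {S S' X Y A B C : Set V} {a b u w : V}

theorem DReach.notMem (h : DReach E S a b) (ha : a ∉ S) : b ∉ S := by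
  induction h with
  | refl => exact ha
  | tail _ hstep _ => exact hstep.2.2

theorem DReach.of_forall_notMem (h : DReach E S a b) (hS' : ∀ w, DReach E S a w → w ∉ S') :
    DReach E S' a b := by
  induction h with
  | refl => exact .refl
  | tail hab hstep ih => exact ih.tail ⟨hstep.1, hS' _ hab, hS' _ (hab.tail hstep)⟩

theorem subset_rSet : X ⊆ RSet E S X := fun x hx => ⟨x, hx, .refl⟩

theorem rSet_mono (h : X ⊆ Y) : RSet E S X ⊆ RSet E S Y :=
  fun _ ⟨x, hx, hr⟩ => ⟨x, h hx, hr⟩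

theorem notMem_of_mem_rSet (hX : ∀ x ∈ X, x ∉ S) (hu : u ∈ RSet E S X) : u ∉ S :=
  let ⟨x, hx, hr⟩ := hu
  hr.notMem (hX x hx)

theorem mem_rSet_of_edge (hu : u ∈ RSet E S X) (huS : u ∉ S) (hwS : w ∉ S) (he : E u w) :
    w ∈ RSet E S X :=
  let ⟨x, hx, hr⟩ := hu
  ⟨x, hx, hr.tail ⟨he, huS, hwS⟩⟩

theorem rSet_subset_of_subset_rSet (h : Y ⊆ RSet E S X) : RSet E S Y ⊆ RSet E S X := by
  rintro w ⟨y, hy, hr⟩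
  obtain ⟨x, hx, hr'⟩ := h hy
  exact ⟨x, hx, hr'.trans hr⟩

theorem rSet_subset_of_forall_notMem (h : ∀ w ∈ RSet E S X, w ∉ S') :
    RSet E S X ⊆ RSet E S' X :=
  fun _ ⟨x, hx, hr⟩ => ⟨x, hx, hr.of_forall_notMem fun w hw => h w ⟨x, hx, hw⟩⟩

theorem notMem_outNbhd_of_mem (hu : u ∈ C) : u ∉ outNbhd E C := fun h => h.1 hu

theorem outNbhd_rSet_subset (hX : ∀ x ∈ X, x ∉ S) : outNbhd E (RSet E S X) ⊆ S := by
  rintro w ⟨hw, u, hu, he⟩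
  by_contra hwS
  exact hw (mem_rSet_of_edge hu (notMem_of_mem_rSet hX hu) hwS he)

theorem rSet_outNbhd_subset (hX : X ⊆ C) : RSet E (outNbhd E C) X ⊆ C := by
  rintro _ ⟨x, hx, hr⟩
  induction hr with
  | refl => exact hX hx
  | tail _ hstep ih => exact by_contra fun hc => hstep.2.2 ⟨hc, _, ih, hstep.1⟩

theorem rSet_subset_rSet_outNbhd (h : RSet E S X ⊆ C) :
    RSet E S X ⊆ RSet E (outNbhd E C) X :=
  rSet_subset_of_forall_notMem fun _ hw => notMem_outNbhd_of_mem (h hw)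

theorem outNbhd_union_subset : outNbhd E (A ∪ B) ⊆ outNbhd E A ∪ outNbhd E B := by
  rintro w ⟨hw, u, hu | hu, he⟩
  · exact Or.inl ⟨fun h => hw (Or.inl h), u, hu, he⟩
  · exact Or.inr ⟨fun h => hw (Or.inr h), u, hu, he⟩

theorem outNbhd_inter_subset : outNbhd E (A ∩ B) ⊆ outNbhd E A ∪ outNbhd E B := by
  rintro w ⟨hw, u, hu, he⟩
  by_cases hwA : w ∈ A
  · exact Or.inr ⟨fun h => hw ⟨hwA, h⟩, u, hu.2, he⟩
  · exact Or.inl ⟨hwA, u, hu.1, he⟩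

theorem outNbhd_union_inter_outNbhd_inter_subset :
    outNbhd E (A ∪ B) ∩ outNbhd E (A ∩ B) ⊆ outNbhd E A ∩ outNbhd E B := by
  rintro w ⟨⟨hw, -⟩, -, u, hu, he⟩
  exact ⟨⟨fun h => hw (Or.inl h), u, hu.1, he⟩, ⟨fun h => hw (Or.inr h), u, hu.2, he⟩⟩

theorem ncard_outNbhd_union_add_ncard_outNbhd_inter_le [Finite V] :
    (outNbhd E (A ∪ B)).ncard + (outNbhd E (A ∩ B)).ncard ≤
      (outNbhd E A).ncard + (outNbhd E B).ncard := by
  rw [← Set.ncard_union_add_ncard_inter, ← Set.ncard_union_add_ncard_inter (outNbhd E A)]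
  exact add_le_add
    (Set.ncard_le_ncard (Set.union_subset outNbhd_union_subset outNbhd_inter_subset))
    (Set.ncard_le_ncard outNbhd_union_inter_outNbhd_inter_subset)

end Reachability

section Separators

variable {E : V → V → Prop} {S S' X Y Z C : Set V} {u y : V}

theorem isSep_of_forall_notMem (hS : ∀ a ∈ X ∪ Y, a ∉ S)
    (hXY : ∀ x ∈ X, ∀ y ∈ Y, ¬ DReach E S x y) : IsSep E X Y S :=
  ⟨Set.eq_empty_iff_forall_notMem.2 fun a ha => hS a ha.2 ha.1, hXY⟩

theorem IsSep.notMem_of_mem_union (h : IsSep E X Y S) (ha : u ∈ X ∪ Y) : u ∉ S :=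
  fun hu => Set.eq_empty_iff_forall_notMem.1 h.1 u ⟨hu, ha⟩

theorem IsSep.notMem_left (h : IsSep E X Y S) (hu : u ∈ X) : u ∉ S :=
  h.notMem_of_mem_union (Or.inl hu)

theorem IsSep.notMem_right (h : IsSep E X Y S) (hy : y ∈ Y) : y ∉ S :=
  h.notMem_of_mem_union (Or.inr hy)

theorem IsSep.notMem_rSet (h : IsSep E X Y S) (hy : y ∈ Y) : y ∉ RSet E S X :=
  fun ⟨x, hx, hr⟩ => h.2 x hx y hy hr

theorem IsSep.notMem_of_mem_rSet (h : IsSep E X Y S) (hu : u ∈ RSet E S X) : u ∉ S :=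
  _root_.notMem_of_mem_rSet (fun _ => h.notMem_left) hu

theorem IsSep.outNbhd_rSet_subset (h : IsSep E X Y S) : outNbhd E (RSet E S X) ⊆ S :=
  _root_.outNbhd_rSet_subset fun _ => h.notMem_left

theorem IsSep.of_subset_rSet (h : IsSep E X Y S) (hZ : Z ⊆ RSet E S X) : IsSep E Z Y S :=
  isSep_of_forall_notMem
    (fun _ ha => ha.elim (fun hz => h.notMem_of_mem_rSet (hZ hz)) h.notMem_right)
    fun _ hz _ hy hr => h.notMem_rSet hy (rSet_subset_of_subset_rSet hZ ⟨_, hz, hr⟩)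

theorem IsSep.union (hX : IsSep E X Y S) (hZ : IsSep E Z Y S) : IsSep E (X ∪ Z) Y S :=
  isSep_of_forall_notMem
    (fun _ ha => ha.elim (·.elim hX.notMem_left hZ.notMem_left) hX.notMem_right)
    fun x hx => hx.elim (hX.2 x) (hZ.2 x)

theorem isSep_outNbhd (hX : X ⊆ C) (hYC : ∀ y ∈ Y, y ∉ C)
    (hYN : ∀ y ∈ Y, y ∉ outNbhd E C) : IsSep E X Y (outNbhd E C) :=
  isSep_of_forall_notMem (fun _ ha => ha.elim (fun hx => notMem_outNbhd_of_mem (hX hx)) (hYN _))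
    fun x hx y hy hr => hYC y hy (rSet_outNbhd_subset hX ⟨x, hx, hr⟩)

theorem IsMinSep.outNbhd_rSet_eq (h : IsMinSep E X Y S) : outNbhd E (RSet E S X) = S := by
  have hsep : IsSep E X Y (outNbhd E (RSet E S X)) :=
    isSep_outNbhd subset_rSet (fun _ => h.1.notMem_rSet)
      fun _ hy hN => h.1.notMem_right hy (h.1.outNbhd_rSet_subset hN)
  exact h.1.outNbhd_rSet_subset.eq_or_ssubset.resolve_right fun hlt => h.2 _ hlt hsep

theorem IsMinSep.ncard_le_of_rSet_eq [Finite V] (h : IsMinSep E X Y S) (hS' : IsSep E X Y S')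
    (hR : RSet E S' X = RSet E S X) : S.ncard ≤ S'.ncard := by
  rw [← h.outNbhd_rSet_eq, ← hR]
  exact Set.ncard_le_ncard hS'.outNbhd_rSet_subset

theorem IsMinSep.eq_empty (h : IsMinSep E X Y S) (h₀ : IsSep E X Y ∅) : S = ∅ :=
  by_contra fun hS => h.2 ∅ (Set.empty_ssubset.2 (Set.nonempty_iff_ne_empty.2 hS)) h₀

theorem IsImpSep.rSet_subset (h : IsImpSep E X Y S) (hS' : IsSep E X Y S')
    (hcard : S'.ncard ≤ S.ncard) (hsub : RSet E S X ⊆ RSet E S' X) :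
    RSet E S' X ⊆ RSet E S X :=
  by_contra fun hc => h.2 ⟨S', hS', hcard, hsub, hc⟩

end Separators

section Uncrossing

variable {E : V → V → Prop} {S₁ S₂ X Y Z T : Set V}

theorem IsSep.isSep_outNbhd_union (h₁ : IsSep E X T S₁) (h₂ : IsSep E Y T S₂)
    (hZ : Z ⊆ RSet E S₁ X ∪ RSet E S₂ Y) :
    IsSep E Z T (outNbhd E (RSet E S₁ X ∪ RSet E S₂ Y)) :=
  isSep_outNbhd hZ (fun _ ht hc => hc.elim (h₁.notMem_rSet ht) (h₂.notMem_rSet ht))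
    fun _ ht hc => (outNbhd_union_subset hc).elim
      (fun h => h₁.notMem_right ht (h₁.outNbhd_rSet_subset h))
      (fun h => h₂.notMem_right ht (h₂.outNbhd_rSet_subset h))

theorem IsSep.isSep_outNbhd_inter (h₁ : IsSep E X T S₁) (h₂ : IsSep E Y T S₂)
    (hZ : Z ⊆ RSet E S₁ X ∩ RSet E S₂ Y) :
    IsSep E Z T (outNbhd E (RSet E S₁ X ∩ RSet E S₂ Y)) :=
  isSep_outNbhd hZ (fun _ ht hc => h₁.notMem_rSet ht hc.1)
    fun _ ht hc => (outNbhd_inter_subset hc).elim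
      (fun h => h₁.notMem_right ht (h₁.outNbhd_rSet_subset h))
      (fun h => h₂.notMem_right ht (h₂.outNbhd_rSet_subset h))

theorem IsSep.ncard_outNbhd_union_add_ncard_outNbhd_inter_le [Finite V] (h₁ : IsSep E X T S₁)
    (h₂ : IsSep E Y T S₂) :
    (outNbhd E (RSet E S₁ X ∪ RSet E S₂ Y)).ncard +
        (outNbhd E (RSet E S₁ X ∩ RSet E S₂ Y)).ncard ≤ S₁.ncard + S₂.ncard :=
  _root_.ncard_outNbhd_union_add_ncard_outNbhd_inter_le.trans
    (add_le_add (Set.ncard_le_ncard h₁.outNbhd_rSet_subset)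
      (Set.ncard_le_ncard h₂.outNbhd_rSet_subset))

end Uncrossing

def IsMinimumSep (E : V → V → Prop) (X Y S : Set V) : Prop :=
  IsSep E X Y S ∧ ∀ S', IsSep E X Y S' → S.ncard ≤ S'.ncard

def IsFurthestMinimumSep (E : V → V → Prop) (X Y S : Set V) : Prop :=
  IsMinimumSep E X Y S ∧ ∀ S', IsMinimumSep E X Y S' → RSet E S' X ⊆ RSet E S X

section MinimumSeparators

variable [Finite V] {E : V → V → Prop} {S S' S₀ X X₀ T : Set V} {v : V}

theorem IsMinimumSep.isMinSep (h : IsMinimumSep E X T S) : IsMinSep E X T S :=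
  ⟨h.1, fun S' hlt hS' => (Set.ncard_lt_ncard hlt).not_ge (h.2 S' hS')⟩

theorem IsMinimumSep.outNbhd_union_of_ncard_le (hS : IsMinimumSep E X T S)
    (hS₀ : IsSep E X₀ T S₀) (hX : X ⊆ X₀) (hcard : S₀.ncard ≤ S.ncard) :
    IsMinimumSep E X T (outNbhd E (RSet E S₀ X₀ ∪ RSet E S X)) := by
  have hXR : X ⊆ RSet E S₀ X₀ := hX.trans subset_rSet
  have hinter := hS₀.isSep_outNbhd_inter hS.1 (Set.subset_inter hXR subset_rSet)
  refine ⟨hS₀.isSep_outNbhd_union hS.1 (hXR.trans Set.subset_union_left), fun S' hS' => ?_⟩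
  have := hS₀.ncard_outNbhd_union_add_ncard_outNbhd_inter_le hS.1
  have := hS.2 _ hinter
  have := hS.2 _ hS'
  omega

theorem exists_isFurthestMinimumSep (h : IsSep E X T S₀) :
    ∃ S, IsFurthestMinimumSep E X T S := by
  obtain ⟨S₁, hS₁, hS₁min⟩ :=
    Set.exists_min_image {S | IsSep E X T S} Set.ncard (Set.toFinite _) ⟨S₀, h⟩
  obtain ⟨S, hS, hmax⟩ := Set.exists_max_image {S | IsMinimumSep E X T S}
    (fun S => (RSet E S X).ncard) (Set.toFinite _) ⟨S₁, hS₁, hS₁min⟩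
  refine ⟨S, hS, fun S' hS' => ?_⟩
  have hgrow : RSet E S X ∪ RSet E S' X ⊆ RSet E (outNbhd E (RSet E S X ∪ RSet E S' X)) X :=
    Set.union_subset (rSet_subset_rSet_outNbhd Set.subset_union_left)
      (rSet_subset_rSet_outNbhd Set.subset_union_right)
  have heq := Set.eq_of_subset_of_ncard_le (Set.subset_union_left.trans hgrow)
    (hmax _ (hS'.outNbhd_union_of_ncard_le hS.1 subset_rfl (hS.2 _ hS'.1)))
  calc RSet E S' X ⊆ _ := Set.subset_union_right.trans hgrow
    _ = RSet E S X := heq.symm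

theorem IsMinimumSep.rSet_subset_of_isImpSep (hS : IsMinimumSep E X T S)
    (himp : IsImpSep E X₀ T S') (hX : X ⊆ RSet E S' X₀) : RSet E S X ⊆ RSet E S' X₀ := by
  have hunion := himp.1.1.isSep_outNbhd_union hS.1 (subset_rSet.trans Set.subset_union_left)
  have hinter := himp.1.1.isSep_outNbhd_inter hS.1 (Set.subset_inter hX subset_rSet)
  have hcard : (outNbhd E (RSet E S' X₀ ∪ RSet E S X)).ncard ≤ S'.ncard := by
    have := himp.1.1.ncard_outNbhd_union_add_ncard_outNbhd_inter_le hS.1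
    have := hS.2 _ hinter
    omega
  have hgrow : RSet E S' X₀ ⊆ RSet E (outNbhd E (RSet E S' X₀ ∪ RSet E S X)) X₀ :=
    rSet_subset_rSet_outNbhd Set.subset_union_left
  calc RSet E S X ⊆ RSet E (outNbhd E (RSet E S' X₀ ∪ RSet E S X)) X :=
        rSet_subset_rSet_outNbhd Set.subset_union_right
    _ ⊆ RSet E (outNbhd E (RSet E S' X₀ ∪ RSet E S X)) X₀ :=
        rSet_subset_of_subset_rSet (hX.trans hgrow)
    _ ⊆ RSet E S' X₀ := himp.rSet_subset hunion hcard hgrow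

theorem IsFurthestMinimumSep.ncard_lt (hS : IsFurthestMinimumSep E X T S) (hv : v ∈ S)
    (hS₀ : IsSep E (insert v X) T S₀) : S.ncard < S₀.ncard := by
  by_contra! hle
  set A := RSet E S₀ (insert v X)
  set B := RSet E S X
  have hunion : IsMinimumSep E X T (outNbhd E (A ∪ B)) :=
    hS.1.outNbhd_union_of_ncard_le hS₀ (Set.subset_insert v X) hle
  obtain ⟨hvB, u, hu, he⟩ : v ∈ outNbhd E B := by
    rwa [hS.1.isMinSep.outNbhd_rSet_eq]
  have hvA : v ∈ A := subset_rSet (Set.mem_insert v X)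
  have hu' : u ∈ RSet E (outNbhd E (A ∪ B)) X :=
    rSet_subset_rSet_outNbhd Set.subset_union_right hu
  exact hvB <| hS.2 _ hunion <| mem_rSet_of_edge hu' (notMem_outNbhd_of_mem (Or.inr hu))
    (notMem_outNbhd_of_mem (Or.inl hvA)) he

end MinimumSeparators

def deleteVertex (E : V → V → Prop) (v : V) : V → V → Prop :=
  fun a b => E a b ∧ a ≠ v ∧ b ≠ v

section DeleteVertex

variable {E : V → V → Prop} {S X T : Set V} {v : V}

theorem dStep_deleteVertex : DStep (deleteVertex E v) S = DStep E (insert v S) := by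
  ext a b
  simp only [DStep, deleteVertex, Set.mem_insert_iff]
  tauto

theorem rSet_deleteVertex : RSet (deleteVertex E v) S X = RSet E (insert v S) X := by
  simp only [RSet, DReach, dStep_deleteVertex]

theorem isSep_deleteVertex_iff (hv : v ∉ X ∪ T) :
    IsSep (deleteVertex E v) X T S ↔ IsSep E X T (insert v S) := by
  simp only [IsSep, DReach, dStep_deleteVertex, Set.insert_inter_of_notMem hv]

theorem IsImpSep.deleteVertex [Finite V] (h : IsImpSep E X T (insert v S)) (hvS : v ∉ S) :
    IsImpSep (deleteVertex E v) X T S := by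
  have hv : v ∉ X ∪ T := fun hXT => h.1.1.notMem_of_mem_union hXT (Set.mem_insert v S)
  refine ⟨⟨(isSep_deleteVertex_iff hv).2 h.1.1, fun S' hlt hS' => ?_⟩, ?_⟩
  · refine h.1.2 _ ⟨Set.insert_subset_insert hlt.1, fun hsub => hlt.2 fun u hu => ?_⟩
      ((isSep_deleteVertex_iff hv).1 hS')
    exact (hsub (Set.mem_insert_of_mem v hu)).resolve_left fun huv => hvS (huv ▸ hu)
  · rintro ⟨S', hS', hcard, hlt⟩
    refine h.2 ⟨insert v S', (isSep_deleteVertex_iff hv).1 hS', ?_, ?_⟩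
    · rw [Set.ncard_insert_of_notMem hvS]
      exact (Set.ncard_insert_le v S').trans (by omega)
    · simpa only [rSet_deleteVertex] using hlt

end DeleteVertex

def impSepsReaching (E : V → V → Prop) (X₀ T X : Set V) (p : ℕ) : Set (Set V) :=
  {S | IsImpSep E X₀ T S ∧ S.ncard ≤ p ∧ X ⊆ RSet E S X₀}

section Counting

variable {E : V → V → Prop} {S X X₀ T : Set V} {p : ℕ} {v : V}

theorem IsSep.of_mem_impSepsReaching (hS : S ∈ impSepsReaching E X₀ T X p) : IsSep E X T S :=
  hS.1.1.1.of_subset_rSet hS.2.2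

theorem impSepsReaching_subset_singleton_empty (hX₀ : X₀ ⊆ X) (h₀ : IsSep E X T ∅) :
    impSepsReaching E X₀ T X p ⊆ {∅} :=
  fun _ hS => hS.1.1.eq_empty (h₀.of_subset_rSet (hX₀.trans subset_rSet))

theorem setOf_mem_impSepsReaching_mem_subset [Finite V] :
    {S ∈ impSepsReaching E X₀ T X p | v ∈ S} ⊆
      insert v '' impSepsReaching (deleteVertex E v) X₀ T X (p - 1) := by
  rintro S ⟨⟨himp, hcard, hX⟩, hv⟩
  have hS : insert v (S \ {v}) = S := by simp [hv]
  refine ⟨S \ {v}, ⟨(hS ▸ himp).deleteVertex fun h => h.2 rfl, ?_, ?_⟩, hS⟩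
  · rw [Set.ncard_sdiff_singleton_of_mem hv]
    omega
  · rwa [rSet_deleteVertex, hS]

theorem setOf_mem_impSepsReaching_notMem_subset [Finite V] (hS : IsMinimumSep E X T S)
    (hv : v ∈ S) :
    {S' ∈ impSepsReaching E X₀ T X p | v ∉ S'} ⊆ impSepsReaching E X₀ T (insert v X) p := by
  rintro S' ⟨⟨himp, hcard, hX⟩, hvS'⟩
  obtain ⟨-, u, hu, he⟩ : v ∈ outNbhd E (RSet E S X) := by
    rwa [hS.isMinSep.outNbhd_rSet_eq]
  have hu' := hS.rSet_subset_of_isImpSep himp hX hu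
  exact ⟨himp, hcard, Set.insert_subset
    (mem_rSet_of_edge hu' (himp.1.1.notMem_of_mem_rSet hu') hvS' he) hX⟩

-- `hp` says `2p - λ ≤ n`, where `λ` is the minimum size of an `X`–`T` separator.
theorem ncard_impSepsReaching_le [Finite V] (n : ℕ) (hX₀ : X₀ ⊆ X)
    (hp : ∀ S, IsSep E X T S → 2 * p ≤ n + S.ncard) :
    (impSepsReaching E X₀ T X p).ncard ≤ 2 ^ n := by
  induction n generalizing E X p with
  | zero =>
    refine (Set.ncard_le_ncard fun S hS => ?_).trans (Set.ncard_singleton (∅ : Set V)).le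
    have := hp S (.of_mem_impSepsReaching hS)
    exact (Set.ncard_eq_zero (Set.toFinite S)).1 (by have := hS.2.1; omega)
  | succ n ih =>
    rcases (impSepsReaching E X₀ T X p).eq_empty_or_nonempty with hempty | ⟨S₁, hS₁⟩
    · simp [hempty]
    obtain ⟨S, hS⟩ := exists_isFurthestMinimumSep (IsSep.of_mem_impSepsReaching hS₁)
    rcases S.eq_empty_or_nonempty with rfl | ⟨v, hv⟩
    · calc _ ≤ ({∅} : Set (Set V)).ncard :=
            Set.ncard_le_ncard (impSepsReaching_subset_singleton_empty hX₀ hS.1.1)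
        _ ≤ 2 ^ (n + 1) := by simp [Nat.one_le_two_pow]
    have hvXT : v ∉ X ∪ T := fun h => hS.1.1.notMem_of_mem_union h hv
    have hmem : {S ∈ impSepsReaching E X₀ T X p | v ∈ S}.ncard ≤ 2 ^ n := by
      refine (Set.ncard_le_ncard setOf_mem_impSepsReaching_mem_subset).trans <|
        (Set.ncard_image_le (Set.toFinite _)).trans <| ih hX₀ fun S₀ hS₀ => ?_
      have := hp _ ((isSep_deleteVertex_iff hvXT).1 hS₀)
      have := Set.ncard_insert_le v S₀
      omega
    have hnotMem : {S ∈ impSepsReaching E X₀ T X p | v ∉ S}.ncard ≤ 2 ^ n := by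
      refine (Set.ncard_le_ncard (setOf_mem_impSepsReaching_notMem_subset hS.1 hv)).trans <|
        ih (hX₀.trans (Set.subset_insert v X)) fun S₀ hS₀ => ?_
      have := hp S hS.1.1
      have := hS.ncard_lt hv hS₀
      omega
    calc _ ≤ ({S ∈ impSepsReaching E X₀ T X p | v ∈ S} ∪
          {S ∈ impSepsReaching E X₀ T X p | v ∉ S}).ncard :=
          Set.ncard_le_ncard fun S hS => (em (v ∈ S)).imp (⟨hS, ·⟩) (⟨hS, ·⟩)
      _ ≤ 2 ^ n + 2 ^ n := (Set.ncard_union_le _ _).trans (add_le_add hmem hnotMem)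
      _ = 2 ^ (n + 1) := by rw [pow_succ, mul_two]

theorem ncard_setOf_isImpSep_le [Finite V] (E : V → V → Prop) (X T : Set V) (p : ℕ) :
    {S | IsImpSep E X T S ∧ S.ncard ≤ p}.ncard ≤ 4 ^ p := by
  have hcover : {S | IsImpSep E X T S ∧ S.ncard ≤ p} = impSepsReaching E X T X p :=
    Set.ext fun _ => ⟨fun h => ⟨h.1, h.2, subset_rSet⟩, fun h => ⟨h.1, h.2.1⟩⟩
  rw [hcover, show 4 ^ p = 2 ^ (2 * p) by rw [pow_mul]; norm_num]
  exact ncard_impSepsReaching_le _ subset_rfl fun _ _ => by omega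

end Counting

theorem IsImpSep.of_isMinSep [Finite V] {E : V → V → Prop} {S X Z T : Set V}
    (himp : IsImpSep E X T S) (hmin : IsMinSep E Z T S) : IsImpSep E Z T S := by
  refine ⟨hmin, ?_⟩
  rintro ⟨S₀, hS₀⟩
  obtain ⟨S', ⟨hS', hS'S, hlt⟩, hS'min⟩ := Set.exists_min_image
    {S' | IsSep E Z T S' ∧ S'.ncard ≤ S.ncard ∧ RSet E S Z ⊂ RSet E S' Z} Set.ncard
    (Set.toFinite _) ⟨S₀, hS₀⟩
  have hXZ : IsSep E (X ∪ Z) T S := himp.1.1.union hmin.1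
  set A := RSet E S (X ∪ Z)
  set B := RSet E S' Z
  have hZAB : RSet E S Z ⊆ A ∩ B := Set.subset_inter (rSet_mono Set.subset_union_right) hlt.1
  have hinter : IsSep E Z T (outNbhd E (A ∩ B)) :=
    hXZ.isSep_outNbhd_inter hS' (subset_rSet.trans hZAB)
  -- by the choice of `S'`, a smaller `N⁺(A ∩ B)` would reach exactly as far as `S`
  have hS'inter : S'.ncard ≤ (outNbhd E (A ∩ B)).ncard := by
    by_contra! hsmall
    have hgrow : RSet E S Z ⊆ RSet E (outNbhd E (A ∩ B)) Z := rSet_subset_rSet_outNbhd hZAB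
    have hsame : RSet E (outNbhd E (A ∩ B)) Z = RSet E S Z := by
      by_contra hne
      exact (hS'min _ ⟨hinter, by omega, hgrow.ssubset_of_ne (Ne.symm hne)⟩).not_gt hsmall
    exact (hmin.ncard_le_of_rSet_eq hinter hsame).not_gt (hsmall.trans_le hS'S)
  have hunion : IsSep E X T (outNbhd E (A ∪ B)) :=
    hXZ.isSep_outNbhd_union hS' ((Set.subset_union_left.trans subset_rSet).trans
      Set.subset_union_left)
  have hcard : (outNbhd E (A ∪ B)).ncard ≤ S.ncard := by
    have : (outNbhd E (A ∪ B)).ncard + (outNbhd E (A ∩ B)).ncard ≤ S.ncard + S'.ncard :=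
      hXZ.ncard_outNbhd_union_add_ncard_outNbhd_inter_le hS'
    omega
  obtain ⟨s, hsS, hsB⟩ : (S ∩ B).Nonempty := by
    by_contra! hSB
    exact hlt.2 (rSet_subset_of_forall_notMem fun w hw hwS => hSB.subset ⟨hwS, hw⟩)
  obtain ⟨hsX, u, hu, he⟩ : s ∈ outNbhd E (RSet E S X) := by
    rwa [himp.1.outNbhd_rSet_eq]
  have hXgrow : RSet E S X ⊆ RSet E (outNbhd E (A ∪ B)) X :=
    rSet_subset_rSet_outNbhd ((rSet_mono Set.subset_union_left).trans Set.subset_union_left)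
  have hs : s ∈ RSet E (outNbhd E (A ∪ B)) X :=
    mem_rSet_of_edge (hXgrow hu)
      (notMem_outNbhd_of_mem (Or.inl (rSet_mono Set.subset_union_left hu)))
      (notMem_outNbhd_of_mem (Or.inr hsB)) he
  exact himp.2 ⟨_, hunion, hcard, hXgrow, fun h => hsX (h hs)⟩

/-- For a fixed vertex `z`, the number of sets `S` that are important
`v`–`T` separators of size at most `p` for some vertex `v` and that contain `z` in their
exact reverse shadow (i.e. `S` is a minimal `z`–`T` separator) is at most `4^p`. -/
theorem count_exact_shadows_containing_vertex [Fintype V]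
    (E : V → V → Prop) (T : Set V) (z : V) (p : ℕ) :
    {S : Set V | (∃ v, IsImpSep E {v} T S ∧ S.ncard ≤ p) ∧
        IsMinSep E {z} T S}.ncard ≤ 4 ^ p := by
  refine (Set.ncard_le_ncard ?_).trans (ncard_setOf_isImpSep_le E {z} T p)
  rintro S ⟨⟨v, himp, hp⟩, hmin⟩
  exact ⟨himp.of_isMinSep hmin, hp⟩
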